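/- Suppose the weight nuisances are correct: f*(A = a | x, Γ=1) = P(A = a | x, Γ=1), f*(Γ=1|x) = P(Γ=1|x), f*(A=1, Γ=0|x) = P(A=1, Γ=0|x), f*(s|x, A=a, Γ=1) = f(s|x, A=a, Γ=1), f*(s|x, A=1, Γ=0) = f(s|x, A=1, Γ=0) (model M_c), with all quantities bounded and positive. Then for any bounded measurable μ*, E[ ((1−Γ)1{A=1}/κ)·(P(Γ=1|X)/P(A=1,Γ=0|X))·(f(S|X,A=a,Γ=1)/f(S|X,A=1,Γ=0))·μ*(X,1,S) ] = E[ (Γ1{A=a}/(κ P(A=a|X,Γ=1)))·μ*(X,1,S) ]. -/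

import Mathlib

/-!
Both sides equal `κ⁻¹ E[p₁(X) G(X)]` with `G x = ∫ μ*(x, s) f_{a1}(x, s) dν(s)`. On the source
side one integrates `S` out against `f₁₀` and then replaces the event `{A = 1, Γ = 0}` by its
conditional probability `p₁₀(X)`; on the target side one integrates `S` out against `f_{a1}`,
then replaces `{A = a, Γ = 1}` by `1{Γ = 1} π(X)` and `{Γ = 1}` by `p₁(X)`.
The hypotheses only allow bounded test functions, and `G` need not be bounded since `ν` is merely
σ-finite; so the identity is first proved for `μ*` truncated to sets of finite `ν`-measure, where
`G` is bounded, and then passed to the limit along the spanning sets of `ν`.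
-/

open MeasureTheory Set

lemma abs_mul_le_of_abs_le {a b A B : ℝ} (ha : |a| ≤ A) (hb : |b| ≤ B) : |a * b| ≤ A * B :=
  abs_mul a b ▸ mul_le_mul ha hb (abs_nonneg b) ((abs_nonneg a).trans ha)

lemma abs_div_le_of_abs_le {a b A ε : ℝ} (ha : |a| ≤ A) (hε : 0 < ε) (hb : ε ≤ b) :
    |a / b| ≤ A / ε := by
  rw [abs_div, abs_of_pos (hε.trans_le hb)]
  exact div_le_div₀ ((abs_nonneg a).trans ha) ha hε hb

lemma abs_ite_one_zero_le (p : Prop) [Decidable p] : |if p then (1 : ℝ) else 0| ≤ 1 := by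
  split_ifs <;> simp

/-- `e` and `w` have the same conditional expectation given `X`, tested against bounded
measurable functions of `X`. -/
def HasSameCondExp {Ω 𝓧 : Type*} [MeasurableSpace Ω] [MeasurableSpace 𝓧] (P : Measure Ω)
    (X : Ω → 𝓧) (e w : Ω → ℝ) : Prop :=
  ∀ h : 𝓧 → ℝ, Measurable h → (∃ C, ∀ x, |h x| ≤ C) →
    ∫ ω, e ω * h (X ω) ∂P = ∫ ω, w ω * h (X ω) ∂P

/-- On the event with indicator `e`, `S` has conditional `ν`-density `f (X ω)` given `X`. -/
def HasCondDensity {Ω 𝓧 𝓢 : Type*} [MeasurableSpace Ω] [MeasurableSpace 𝓧] [MeasurableSpace 𝓢]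
    (P : Measure Ω) (X : Ω → 𝓧) (S : Ω → 𝓢) (ν : Measure 𝓢) (e : Ω → ℝ) (f : 𝓧 → 𝓢 → ℝ) :
    Prop :=
  ∀ g : 𝓧 → 𝓢 → ℝ, Measurable (Function.uncurry g) → (∃ C, ∀ x s, |g x s| ≤ C) →
    ∫ ω, e ω * g (X ω) (S ω) ∂P = ∫ ω, e ω * (∫ s, g (X ω) s * f (X ω) s ∂ν) ∂P

section

variable {Ω : Type*} [MeasurableSpace Ω] {P : Measure Ω}

lemma integrable_of_abs_le [IsFiniteMeasure P] {F : Ω → ℝ} (hF : Measurable F) {C : ℝ}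
    (h : ∀ ω, |F ω| ≤ C) : Integrable F P :=
  .of_bound hF.aestronglyMeasurable C (ae_of_all _ h)

lemma integral_eq_of_forall_setIntegral_eq {s : ℕ → Set Ω} (hs : ∀ n, MeasurableSet (s n))
    (hmono : Monotone s) (hcover : ⋃ n, s n = univ) {F G : Ω → ℝ} (hF : Integrable F P)
    (hG : Integrable G P) (h : ∀ n, ∫ ω in s n, F ω ∂P = ∫ ω in s n, G ω ∂P) :
    ∫ ω, F ω ∂P = ∫ ω, G ω ∂P := by
  have hF' := tendsto_setIntegral_of_monotone hs hmono (by rw [hcover]; exact hF.integrableOn)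
  have hG' := tendsto_setIntegral_of_monotone hs hmono (by rw [hcover]; exact hG.integrableOn)
  rw [hcover, setIntegral_univ] at hF' hG'
  exact tendsto_nhds_unique (hF'.congr h) hG'

variable {𝓧 𝓢 : Type*} [MeasurableSpace 𝓢] {X : Ω → 𝓧} {S : Ω → 𝓢} {ν : Measure 𝓢}

lemma setIntegral_preimage_mul_eq_integral_indicator (hS : Measurable S) {T : Set 𝓢}
    (hT : MeasurableSet T) (Ψ : Ω → ℝ) (m : 𝓧 → 𝓢 → ℝ) :
    ∫ ω in S ⁻¹' T, Ψ ω * m (X ω) (S ω) ∂P = ∫ ω, Ψ ω * T.indicator (m (X ω)) (S ω) ∂P := by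
  rw [← integral_indicator (hS hT)]
  congr 1 with ω
  by_cases hω : S ω ∈ T <;> simp [hω]

lemma integral_mul_eq_of_forall_indicator_eq [SigmaFinite ν] (hS : Measurable S)
    {Ψ Φ : Ω → ℝ} {m : 𝓧 → 𝓢 → ℝ} (hΨ : Integrable (fun ω => Ψ ω * m (X ω) (S ω)) P)
    (hΦ : Integrable (fun ω => Φ ω * m (X ω) (S ω)) P)
    (h : ∀ T, MeasurableSet T → ν T < ⊤ →
      ∫ ω, Ψ ω * T.indicator (m (X ω)) (S ω) ∂P = ∫ ω, Φ ω * T.indicator (m (X ω)) (S ω) ∂P) :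
    ∫ ω, Ψ ω * m (X ω) (S ω) ∂P = ∫ ω, Φ ω * m (X ω) (S ω) ∂P := by
  have hT := measurableSet_spanningSets ν
  refine integral_eq_of_forall_setIntegral_eq (fun n => hS (hT n))
    (fun _ _ hmn => preimage_mono (monotone_spanningSets ν hmn))
    (by rw [← preimage_iUnion, iUnion_spanningSets, preimage_univ]) hΨ hΦ fun n => ?_
  rw [setIntegral_preimage_mul_eq_integral_indicator hS (hT n),
    setIntegral_preimage_mul_eq_integral_indicator hS (hT n)]
  exact h _ (hT n) (measure_spanningSets_lt_top ν n)

lemma abs_integral_indicator_mul_le {T : Set 𝓢} (hT : MeasurableSet T) (hTν : ν T < ⊤)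
    {m f : 𝓧 → 𝓢 → ℝ} {Cm Cf : ℝ} (hm : ∀ x s, |m x s| ≤ Cm) (hf : ∀ x s, |f x s| ≤ Cf) (x : 𝓧) :
    |∫ s, T.indicator (m x) s * f x s ∂ν| ≤ Cm * Cf * ν.real T := by
  have hind : ∀ s, T.indicator (m x) s * f x s = T.indicator (fun s => m x s * f x s) s := by
    intro s
    by_cases hs : s ∈ T <;> simp [hs]
  simp_rw [hind, integral_indicator hT, ← Real.norm_eq_abs]
  exact norm_setIntegral_le_of_norm_le_const hTν fun s _ => abs_mul_le_of_abs_le (hm x s) (hf x s)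

variable [MeasurableSpace 𝓧] [SFinite ν]

lemma measurable_integral_mul {g f : 𝓧 → 𝓢 → ℝ} (hg : Measurable (Function.uncurry g))
    (hf : Measurable (Function.uncurry f)) : Measurable fun x => ∫ s, g x s * f x s ∂ν :=
  (hg.mul hf).stronglyMeasurable.integral_prod_right'.measurable

lemma HasCondDensity.integral_eq_of_hasSameCondExp {e w : Ω → ℝ} {f : 𝓧 → 𝓢 → ℝ}
    (hf : HasCondDensity P X S ν e f) (hw : HasSameCondExp P X e w)
    (hfm : Measurable (Function.uncurry f)) {g : 𝓧 → 𝓢 → ℝ}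
    (hgm : Measurable (Function.uncurry g)) (hg : ∃ C, ∀ x s, |g x s| ≤ C)
    (hG : ∃ C, ∀ x, |∫ s, g x s * f x s ∂ν| ≤ C) :
    ∫ ω, e ω * g (X ω) (S ω) ∂P = ∫ ω, w ω * ∫ s, g (X ω) s * f (X ω) s ∂ν ∂P :=
  (hf g hgm hg).trans (hw _ (measurable_integral_mul hgm hfm) hG)

lemma integral_densityRatio_weight {e : Ω → ℝ} {r w : 𝓧 → ℝ} {fa f : 𝓧 → 𝓢 → ℝ}
    (hw : HasSameCondExp P X e fun ω => w (X ω)) (hf : HasCondDensity P X S ν e f)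
    (hrm : Measurable r) (hwm : Measurable w) (ham : Measurable (Function.uncurry fa))
    (hfm : Measurable (Function.uncurry f)) {ε Cr Ca : ℝ} (hε : 0 < ε)
    (hr : ∀ x, |r x| ≤ Cr) (hwε : ∀ x, ε ≤ w x) (ha : ∀ x s, |fa x s| ≤ Ca)
    (hfε : ∀ x s, ε ≤ f x s) {m : 𝓧 → 𝓢 → ℝ} (hmm : Measurable (Function.uncurry m))
    {Cm CG : ℝ} (hm : ∀ x s, |m x s| ≤ Cm) (hG : ∀ x, |∫ s, m x s * fa x s ∂ν| ≤ CG) :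
    ∫ ω, e ω * (r (X ω) / w (X ω)) * (fa (X ω) (S ω) / f (X ω) (S ω)) * m (X ω) (S ω) ∂P
      = ∫ ω, r (X ω) * ∫ s, m (X ω) s * fa (X ω) s ∂ν ∂P := by
  set g : 𝓧 → 𝓢 → ℝ := fun x s => r x / w x * (fa x s / f x s * m x s)
  have hgf : ∀ x, ∫ s, g x s * f x s ∂ν = r x / w x * ∫ s, m x s * fa x s ∂ν := fun x => by
    rw [← integral_const_mul]
    congr 1 with s
    have := (hε.trans_le (hfε x s)).ne'
    simp only [g]
    field_simp
  have hgm : Measurable (Function.uncurry g) :=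
    ((hrm.div hwm).comp measurable_fst).mul ((ham.div hfm).mul hmm)
  have hgb : ∀ x s, |g x s| ≤ Cr / ε * (Ca / ε * Cm) := fun x s =>
    abs_mul_le_of_abs_le (abs_div_le_of_abs_le (hr x) hε (hwε x))
      (abs_mul_le_of_abs_le (abs_div_le_of_abs_le (ha x s) hε (hfε x s)) (hm x s))
  have hGb : ∀ x, |∫ s, g x s * f x s ∂ν| ≤ Cr / ε * CG := fun x =>
    hgf x ▸ abs_mul_le_of_abs_le (abs_div_le_of_abs_le (hr x) hε (hwε x)) (hG x)
  calc _ = ∫ ω, e ω * g (X ω) (S ω) ∂P := by congr 1 with ω; simp only [g]; ring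
    _ = ∫ ω, w (X ω) * ∫ s, g (X ω) s * f (X ω) s ∂ν ∂P :=
      hf.integral_eq_of_hasSameCondExp hw hfm hgm ⟨_, hgb⟩ ⟨_, hGb⟩
    _ = _ := by
      congr 1 with ω
      have := (hε.trans_le (hwε (X ω))).ne'
      rw [hgf]
      field_simp

lemma integral_invPropensity_weight {e e' : Ω → ℝ} {π : 𝓧 → ℝ} {fa : 𝓧 → 𝓢 → ℝ}
    (hπ : HasSameCondExp P X e fun ω => e' ω * π (X ω)) (hf : HasCondDensity P X S ν e fa)
    (hπm : Measurable π) (ham : Measurable (Function.uncurry fa)) {ε : ℝ} (hε : 0 < ε)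
    (hπε : ∀ x, ε ≤ π x) {m : 𝓧 → 𝓢 → ℝ} (hmm : Measurable (Function.uncurry m))
    {Cm CG : ℝ} (hm : ∀ x s, |m x s| ≤ Cm) (hG : ∀ x, |∫ s, m x s * fa x s ∂ν| ≤ CG) :
    ∫ ω, e ω / π (X ω) * m (X ω) (S ω) ∂P
      = ∫ ω, e' ω * ∫ s, m (X ω) s * fa (X ω) s ∂ν ∂P := by
  set g : 𝓧 → 𝓢 → ℝ := fun x s => m x s / π x
  have hgf : ∀ x, ∫ s, g x s * fa x s ∂ν = (∫ s, m x s * fa x s ∂ν) / π x := fun x => by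
    rw [← integral_div]
    congr 1 with s
    simp only [g]
    ring
  have hgm : Measurable (Function.uncurry g) := hmm.div (hπm.comp measurable_fst)
  have hgb : ∀ x s, |g x s| ≤ Cm / ε := fun x s => abs_div_le_of_abs_le (hm x s) hε (hπε x)
  have hGb : ∀ x, |∫ s, g x s * fa x s ∂ν| ≤ CG / ε := fun x =>
    hgf x ▸ abs_div_le_of_abs_le (hG x) hε (hπε x)
  calc _ = ∫ ω, e ω * g (X ω) (S ω) ∂P := by congr 1 with ω; simp only [g]; ring
    _ = ∫ ω, e' ω * π (X ω) * ∫ s, g (X ω) s * fa (X ω) s ∂ν ∂P :=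
      hf.integral_eq_of_hasSameCondExp hπ ham hgm ⟨_, hgb⟩ ⟨_, hGb⟩
    _ = _ := by
      congr 1 with ω
      have := (hε.trans_le (hπε (X ω))).ne'
      rw [hgf]
      field_simp

end

theorem weighting_equivalence_Mc_general
    {Ω 𝓧 𝓢 : Type*} [MeasurableSpace Ω] [MeasurableSpace 𝓧] [MeasurableSpace 𝓢]
    (P : Measure Ω) [IsProbabilityMeasure P]
    (X : Ω → 𝓧) (A : Ω → ℕ) (Γ : Ω → ℕ) (S : Ω → 𝓢)
    (hX : Measurable X) (hA : Measurable A) (hΓ : Measurable Γ) (hS : Measurable S)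
    (a : ℕ) (ε : ℝ) (hε : 0 < ε)
    (κ : ℝ)
    (ν : Measure 𝓢) [SigmaFinite ν]
    -- p1 is a version of P(Γ = 1 | X):
    (p1 : 𝓧 → ℝ) (hp1m : Measurable p1) (hp1bd : ∀ x, 0 ≤ p1 x ∧ p1 x ≤ 1)
    (hp1 : ∀ h : 𝓧 → ℝ, Measurable h → (∃ C, ∀ x, |h x| ≤ C) →
      ∫ ω, (if Γ ω = 1 then (1:ℝ) else 0) * h (X ω) ∂P = ∫ ω, p1 (X ω) * h (X ω) ∂P)
    -- p10 is a version of P(A = 1, Γ = 0 | X), with positivity: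
    (p10 : 𝓧 → ℝ) (hp10m : Measurable p10) (hp10bd : ∀ x, ε ≤ p10 x ∧ p10 x ≤ 1)
    (hp10 : ∀ h : 𝓧 → ℝ, Measurable h → (∃ C, ∀ x, |h x| ≤ C) →
      ∫ ω, (if A ω = 1 ∧ Γ ω = 0 then (1:ℝ) else 0) * h (X ω) ∂P
        = ∫ ω, p10 (X ω) * h (X ω) ∂P)
    -- π is a version of P(A = a | X, Γ = 1), with positivity:
    (π : 𝓧 → ℝ) (hπm : Measurable π) (hπbd : ∀ x, ε ≤ π x ∧ π x ≤ 1)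
    (hπ : ∀ h : 𝓧 → ℝ, Measurable h → (∃ C, ∀ x, |h x| ≤ C) →
      ∫ ω, (if A ω = a ∧ Γ ω = 1 then (1:ℝ) else 0) * h (X ω) ∂P
        = ∫ ω, (if Γ ω = 1 then (1:ℝ) else 0) * π (X ω) * h (X ω) ∂P)
    -- fa1 is the conditional ν-density of S given (X, A = a, Γ = 1):
    (fa1 : 𝓧 → 𝓢 → ℝ) (hfa1m : Measurable (Function.uncurry fa1))
    (Cf : ℝ) (hfa1bd : ∀ x s, 0 ≤ fa1 x s ∧ fa1 x s ≤ Cf)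
    (hfa1 : ∀ g : 𝓧 → 𝓢 → ℝ, Measurable (Function.uncurry g) → (∃ C, ∀ x s, |g x s| ≤ C) →
      ∫ ω, (if A ω = a ∧ Γ ω = 1 then (1:ℝ) else 0) * g (X ω) (S ω) ∂P
        = ∫ ω, (if A ω = a ∧ Γ ω = 1 then (1:ℝ) else 0) * (∫ s, g (X ω) s * fa1 (X ω) s ∂ν) ∂P)
    -- f10 is the conditional ν-density of S given (X, A = 1, Γ = 0), with positivity:
    (f10 : 𝓧 → 𝓢 → ℝ) (hf10m : Measurable (Function.uncurry f10))
    (hf10bd : ∀ x s, ε ≤ f10 x s ∧ f10 x s ≤ Cf)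
    (hf10 : ∀ g : 𝓧 → 𝓢 → ℝ, Measurable (Function.uncurry g) → (∃ C, ∀ x s, |g x s| ≤ C) →
      ∫ ω, (if A ω = 1 ∧ Γ ω = 0 then (1:ℝ) else 0) * g (X ω) (S ω) ∂P
        = ∫ ω, (if A ω = 1 ∧ Γ ω = 0 then (1:ℝ) else 0) * (∫ s, g (X ω) s * f10 (X ω) s ∂ν) ∂P)
    -- μ* is an arbitrary bounded measurable function:
    (μstar : 𝓧 → 𝓢 → ℝ) (hμm : Measurable (Function.uncurry μstar))
    (Cμ : ℝ) (hμb : ∀ x s, |μstar x s| ≤ Cμ) :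
    ∫ ω, ((if A ω = 1 ∧ Γ ω = 0 then (1:ℝ) else 0) / κ)
        * (p1 (X ω) / p10 (X ω)) * (fa1 (X ω) (S ω) / f10 (X ω) (S ω)) * μstar (X ω) (S ω) ∂P
      = ∫ ω, (if A ω = a ∧ Γ ω = 1 then (1:ℝ) else 0) / (κ * π (X ω)) * μstar (X ω) (S ω) ∂P := by
  have hp1abs : ∀ x, |p1 x| ≤ 1 := fun x => (abs_of_nonneg (hp1bd x).1).trans_le (hp1bd x).2
  have hfa1abs : ∀ x s, |fa1 x s| ≤ Cf := fun x s =>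
    (abs_of_nonneg (hfa1bd x s).1).trans_le (hfa1bd x s).2
  have he10 : Measurable fun ω => if A ω = 1 ∧ Γ ω = 0 then (1:ℝ) else 0 :=
    .ite (by measurability) measurable_const measurable_const
  have hea1 : Measurable fun ω => if A ω = a ∧ Γ ω = 1 then (1:ℝ) else 0 :=
    .ite (by measurability) measurable_const measurable_const
  have key : ∫ ω, (if A ω = 1 ∧ Γ ω = 0 then (1:ℝ) else 0) * (p1 (X ω) / p10 (X ω))
        * (fa1 (X ω) (S ω) / f10 (X ω) (S ω)) * μstar (X ω) (S ω) ∂P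
      = ∫ ω, (if A ω = a ∧ Γ ω = 1 then (1:ℝ) else 0) / π (X ω) * μstar (X ω) (S ω) ∂P := by
    refine integral_mul_eq_of_forall_indicator_eq (ν := ν) hS ?_ ?_ fun T hT hTν => ?_
    · exact integrable_of_abs_le (by fun_prop) fun ω => abs_mul_le_of_abs_le
        (abs_mul_le_of_abs_le (abs_mul_le_of_abs_le (abs_ite_one_zero_le _)
          (abs_div_le_of_abs_le (hp1abs _) hε (hp10bd _).1))
        (abs_div_le_of_abs_le (hfa1abs _ _) hε (hf10bd _ _).1)) (hμb _ _)
    · exact integrable_of_abs_le (by fun_prop) fun ω => abs_mul_le_of_abs_le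
        (abs_div_le_of_abs_le (abs_ite_one_zero_le _) hε (hπbd _).1) (hμb _ _)
    have hmm : Measurable (Function.uncurry fun x => T.indicator (μstar x)) :=
      hμm.indicator (measurable_snd hT)
    have hm : ∀ x s, |T.indicator (μstar x) s| ≤ Cμ := fun x s =>
      (norm_indicator_le_norm_self (s := T) (f := μstar x) (a := s)).trans (hμb x s)
    have hG := abs_integral_indicator_mul_le hT hTν hμb hfa1abs
    rw [integral_densityRatio_weight hp10 hf10 hp1m hp10m hfa1m hf10m hε hp1abs
        (fun x => (hp10bd x).1) hfa1abs (fun x s => (hf10bd x s).1) hmm hm hG,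
      integral_invPropensity_weight hπ hfa1 hπm hfa1m hε (fun x => (hπbd x).1) hmm hm hG,
      hp1 _ (measurable_integral_mul hmm hfa1m) ⟨_, hG⟩]
  convert congrArg (· / κ) key using 1 <;> rw [← integral_div] <;> congr 1 with ω <;> ring

/-- Model `M_c` lemma: when all weight nuisances are correctly specified, density-ratio
weighting of the source population and inverse-propensity weighting in the target
population induce the same expectation for any bounded function `μ*` of `(X, S)`. -/
theorem weighting_equivalence_Mc
    {Ω 𝓧 𝓢 : Type*} [MeasurableSpace Ω] [MeasurableSpace 𝓧] [MeasurableSpace 𝓢]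
    (P : Measure Ω) [IsProbabilityMeasure P]
    (X : Ω → 𝓧) (A : Ω → ℕ) (Γ : Ω → ℕ) (S : Ω → 𝓢)
    (hX : Measurable X) (hA : Measurable A) (hΓ : Measurable Γ) (hS : Measurable S)
    (hΓ01 : ∀ ω, Γ ω = 0 ∨ Γ ω = 1)
    (a : ℕ) (ε : ℝ) (hε : 0 < ε)
    (κ : ℝ) (hκdef : κ = (P {ω | Γ ω = 1}).toReal) (hκpos : 0 < κ)
    (ν : Measure 𝓢) [SigmaFinite ν]
    -- p1 is a version of P(Γ = 1 | X):
    (p1 : 𝓧 → ℝ) (hp1m : Measurable p1) (hp1bd : ∀ x, 0 ≤ p1 x ∧ p1 x ≤ 1)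
    (hp1 : ∀ h : 𝓧 → ℝ, Measurable h → (∃ C, ∀ x, |h x| ≤ C) →
      ∫ ω, (if Γ ω = 1 then (1:ℝ) else 0) * h (X ω) ∂P = ∫ ω, p1 (X ω) * h (X ω) ∂P)
    -- p10 is a version of P(A = 1, Γ = 0 | X), with positivity:
    (p10 : 𝓧 → ℝ) (hp10m : Measurable p10) (hp10bd : ∀ x, ε ≤ p10 x ∧ p10 x ≤ 1)
    (hp10 : ∀ h : 𝓧 → ℝ, Measurable h → (∃ C, ∀ x, |h x| ≤ C) →
      ∫ ω, (if A ω = 1 ∧ Γ ω = 0 then (1:ℝ) else 0) * h (X ω) ∂P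
        = ∫ ω, p10 (X ω) * h (X ω) ∂P)
    -- π is a version of P(A = a | X, Γ = 1), with positivity:
    (π : 𝓧 → ℝ) (hπm : Measurable π) (hπbd : ∀ x, ε ≤ π x ∧ π x ≤ 1)
    (hπ : ∀ h : 𝓧 → ℝ, Measurable h → (∃ C, ∀ x, |h x| ≤ C) →
      ∫ ω, (if A ω = a ∧ Γ ω = 1 then (1:ℝ) else 0) * h (X ω) ∂P
        = ∫ ω, (if Γ ω = 1 then (1:ℝ) else 0) * π (X ω) * h (X ω) ∂P)
    -- fa1 is the conditional ν-density of S given (X, A = a, Γ = 1):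
    (fa1 : 𝓧 → 𝓢 → ℝ) (hfa1m : Measurable (Function.uncurry fa1))
    (Cf : ℝ) (hfa1bd : ∀ x s, 0 ≤ fa1 x s ∧ fa1 x s ≤ Cf)
    (hfa1 : ∀ g : 𝓧 → 𝓢 → ℝ, Measurable (Function.uncurry g) → (∃ C, ∀ x s, |g x s| ≤ C) →
      ∫ ω, (if A ω = a ∧ Γ ω = 1 then (1:ℝ) else 0) * g (X ω) (S ω) ∂P
        = ∫ ω, (if A ω = a ∧ Γ ω = 1 then (1:ℝ) else 0) * (∫ s, g (X ω) s * fa1 (X ω) s ∂ν) ∂P)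
    -- f10 is the conditional ν-density of S given (X, A = 1, Γ = 0), with positivity:
    (f10 : 𝓧 → 𝓢 → ℝ) (hf10m : Measurable (Function.uncurry f10))
    (hf10bd : ∀ x s, ε ≤ f10 x s ∧ f10 x s ≤ Cf)
    (hf10 : ∀ g : 𝓧 → 𝓢 → ℝ, Measurable (Function.uncurry g) → (∃ C, ∀ x s, |g x s| ≤ C) →
      ∫ ω, (if A ω = 1 ∧ Γ ω = 0 then (1:ℝ) else 0) * g (X ω) (S ω) ∂P
        = ∫ ω, (if A ω = 1 ∧ Γ ω = 0 then (1:ℝ) else 0) * (∫ s, g (X ω) s * f10 (X ω) s ∂ν) ∂P)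
    -- μ* is an arbitrary bounded measurable function:
    (μstar : 𝓧 → 𝓢 → ℝ) (hμm : Measurable (Function.uncurry μstar))
    (Cμ : ℝ) (hμb : ∀ x s, |μstar x s| ≤ Cμ) :
    ∫ ω, ((if A ω = 1 ∧ Γ ω = 0 then (1:ℝ) else 0) / κ)
        * (p1 (X ω) / p10 (X ω)) * (fa1 (X ω) (S ω) / f10 (X ω) (S ω)) * μstar (X ω) (S ω) ∂P
      = ∫ ω, (if A ω = a ∧ Γ ω = 1 then (1:ℝ) else 0) / (κ * π (X ω)) * μstar (X ω) (S ω) ∂P :=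
  weighting_equivalence_Mc_general P X A Γ S hX hA hΓ hS a ε hε κ ν p1 hp1m hp1bd hp1 p10 hp10m
    hp10bd hp10 π hπm hπbd hπ fa1 hfa1m Cf hfa1bd hfa1 f10 hf10m hf10bd hf10 μstar hμm Cμ hμb
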